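/- Let ω be a majorant, α ∈ [0,1], C₅ > 0, and let f ∈ C¹(𝔻) be univalent with convex image f(𝔻). Suppose l(D_f(z)) ≥ ω((1+|z|)^{1−α})/C₅ for all z ∈ 𝔻. Then for all z₁, z₂ ∈ 𝔻, |f(z₁) − f(z₂)| ≥ (1/(2^{1−α} C₅)) ω(((1+|z₁|)(1+|z₂|))^{(1−α)/2}) |z₁ − z₂|. -/

import Mathlib

/-!
Writing `D_f(z) v = f_z v + f_{z̄} v̄` shows `‖D_f(z) v‖ ≥ l(D_f(z)) ‖v‖`. With
`s₀ = ((1+|z₁|)(1+|z₂|))^{(1-α)/2} ≤ 2^{1-α} ≤ 2^{1-α} (1+|z|)^{1-α}`, the majorant inequality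
`ω(ν t) ≥ ν ω(t)` and monotonicity give `ω(s₀) / 2^{1-α} ≤ ω((1+|z|)^{1-α})`, so `D_f(z)` stretches
every vector by at least `c = ω(s₀) / (2^{1-α} C₅)` on the whole disc. Hence `f⁻¹` is differentiable
on the convex set `f(𝔻)` with `‖D(f⁻¹)‖ ≤ 1/c`, and the mean value inequality along the segment
`[f(z₁), f(z₂)] ⊆ f(𝔻)` gives `c |z₁ - z₂| ≤ |f(z₁) - f(z₂)|`.
-/

open Complex Metric Set

/-- Wirtinger derivative f_z = (f_x − i f_y)/2. -/
noncomputable def wdz (f : ℂ → ℂ) (z : ℂ) : ℂ :=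
  (fderiv ℝ f z 1 - Complex.I * fderiv ℝ f z Complex.I) / 2

/-- Wirtinger derivative f_{z̄} = (f_x + i f_y)/2. -/
noncomputable def wdzbar (f : ℂ → ℂ) (z : ℂ) : ℂ :=
  (fderiv ℝ f z 1 + Complex.I * fderiv ℝ f z Complex.I) / 2

open ComplexConjugate

theorem fderiv_apply_eq_wdz_mul_add_wdzbar_mul_conj (f : ℂ → ℂ) (z v : ℂ) :
    fderiv ℝ f z v = wdz f z * v + wdzbar f z * conj v := by
  set L := fderiv ℝ f z
  have hv : v = v.re + v.im * I := (re_add_im v).symm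
  have hLv : L v = v.re * L 1 + v.im * L I := by
    conv_lhs => rw [show v = v.re • (1 : ℂ) + v.im • I by simp [real_smul]]
    rw [map_add, map_smul, map_smul, real_smul, real_smul]
  have hconj : conj v = v.re - v.im * I := by simp [Complex.ext_iff]
  rw [hLv, hconj, wdz, wdzbar]
  linear_combination (-(L 1 - I * L I) / 2) * hv + (v.im * L I) * I_sq

theorem abs_norm_wdz_sub_norm_wdzbar_mul_le (f : ℂ → ℂ) (z v : ℂ) :
    |‖wdz f z‖ - ‖wdzbar f z‖| * ‖v‖ ≤ ‖fderiv ℝ f z v‖ := by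
  have h := abs_norm_sub_norm_le (wdz f z * v) (-(wdzbar f z * conj v))
  rwa [norm_neg, norm_mul, norm_mul, norm_conj, ← sub_mul, abs_mul, abs_norm, sub_neg_eq_add,
    ← fderiv_apply_eq_wdz_mul_add_wdzbar_mul_conj] at h

theorem div_le_apply_div_of_antitoneOn_div {ω : ℝ → ℝ}
    (hdec : AntitoneOn (fun t => ω t / t) (Ioi 0)) {s A : ℝ} (hs : 0 < s) (hA : 1 ≤ A) :
    ω s / A ≤ ω (s / A) := by
  have hsA : 0 < s / A := by positivity
  have h : ω s / s ≤ ω (s / A) / (s / A) := hdec hsA hs (div_le_self hs.le hA)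
  rw [div_le_iff₀ (by positivity)]
  rwa [div_div_eq_mul_div, div_le_div_iff_of_pos_right hs] at h

theorem one_add_mul_one_add_rpow_div_two_le {a b β : ℝ} (ha : 0 ≤ a) (ha₁ : a ≤ 1) (hb : 0 ≤ b)
    (hb₁ : b ≤ 1) (hβ : 0 ≤ β) : ((1 + a) * (1 + b)) ^ (β / 2) ≤ 2 ^ β :=
  calc ((1 + a) * (1 + b)) ^ (β / 2) ≤ ((2:ℝ) ^ (2:ℝ)) ^ (β / 2) := by
        refine Real.rpow_le_rpow (by positivity) ?_ (by positivity)
        norm_num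
        nlinarith
    _ = 2 ^ β := by
        rw [← Real.rpow_mul zero_le_two]
        ring_nf

theorem HasStrictFDerivAt.hasFDerivAt_invFunOn {𝕜 E F : Type*} [NontriviallyNormedField 𝕜]
    [NormedAddCommGroup E] [NormedSpace 𝕜 E] [CompleteSpace E] [NormedAddCommGroup F]
    [NormedSpace 𝕜 F] {f : E → F} {f' : E ≃L[𝕜] F} {s : Set E} {z : E}
    (hf : HasStrictFDerivAt f (f' : E →L[𝕜] F) z) (hs : s ∈ nhds z) (hinj : InjOn f s) :
    HasFDerivAt (Function.invFunOn f s) (f'.symm : F →L[𝕜] E) (f z) := by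
  refine hf.to_localInverse.hasFDerivAt.congr_of_eventuallyEq ?_
  have hmem : ∀ᶠ y in nhds (f z), hf.localInverse f f' z y ∈ s :=
    hf.localInverse_continuousAt.eventually_mem (by rwa [hf.localInverse_apply_image])
  filter_upwards [hf.eventually_right_inverse, hmem] with y hy hys
  rw [← hy, hinj.leftInvOn_invFunOn hys, hy]

section

variable {E : Type*} [NormedAddCommGroup E] [NormedSpace ℝ E]

theorem ContinuousLinearEquiv.opNorm_symm_le_of_mul_norm_le {F : Type*} [NormedAddCommGroup F]
    [NormedSpace ℝ F] (L : E ≃L[ℝ] F) {c : ℝ} (hc : 0 < c) (hL : ∀ v, c * ‖v‖ ≤ ‖L v‖) :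
    ‖(L.symm : F →L[ℝ] E)‖ ≤ c⁻¹ :=
  ContinuousLinearMap.opNorm_le_bound _ (inv_nonneg.mpr hc.le) fun u => by
    rw [inv_mul_eq_div, le_div_iff₀' hc]
    simpa using hL (L.symm u)

variable [FiniteDimensional ℝ E]

theorem ContinuousLinearMap.exists_equiv_of_mul_norm_le (L : E →L[ℝ] E) {c : ℝ} (hc : 0 < c)
    (hL : ∀ v, c * ‖v‖ ≤ ‖L v‖) : ∃ L' : E ≃L[ℝ] E, (L' : E →L[ℝ] E) = L := by
  have hinj : Function.Injective L := fun u v huv => by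
    have h := hL (u - v)
    rw [map_sub, huv, sub_self, norm_zero] at h
    exact sub_eq_zero.mp (norm_le_zero_iff.mp (nonpos_of_mul_nonpos_right h hc))
  exact ⟨(LinearEquiv.ofInjectiveEndo (L : E →ₗ[ℝ] E) hinj).toContinuousLinearEquiv, rfl⟩

theorem Convex.mul_norm_sub_le_norm_sub_of_injOn {f : E → E} {s : Set E} (hs : IsOpen s)
    (hf : ContDiffOn ℝ 1 f s) (hinj : InjOn f s) (hconv : Convex ℝ (f '' s)) {c : ℝ}
    (hc : 0 < c) (hbound : ∀ z ∈ s, ∀ v, c * ‖v‖ ≤ ‖fderiv ℝ f z v‖) {x y : E} (hx : x ∈ s)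
    (hy : y ∈ s) : c * ‖x - y‖ ≤ ‖f x - f y‖ := by
  have hg : ∀ w ∈ f '' s, DifferentiableAt ℝ (Function.invFunOn f s) w ∧
      ‖fderiv ℝ (Function.invFunOn f s) w‖ ≤ c⁻¹ := by
    rintro _ ⟨z, hz, rfl⟩
    obtain ⟨L, hL⟩ := (fderiv ℝ f z).exists_equiv_of_mul_norm_le hc (hbound z hz)
    have hstrict : HasStrictFDerivAt f (L : E →L[ℝ] E) z :=
      hL ▸ (hf.contDiffAt (hs.mem_nhds hz)).hasStrictFDerivAt one_ne_zero
    have hderiv := hstrict.hasFDerivAt_invFunOn (hs.mem_nhds hz) hinj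
    refine ⟨hderiv.differentiableAt, hderiv.fderiv ▸ L.opNorm_symm_le_of_mul_norm_le hc ?_⟩
    simpa only [← hL, ContinuousLinearEquiv.coe_coe] using hbound z hz
  have hlip := hconv.norm_image_sub_le_of_norm_fderiv_le (fun w hw => (hg w hw).1)
    (fun w hw => (hg w hw).2) (mem_image_of_mem f hy) (mem_image_of_mem f hx)
  rwa [hinj.leftInvOn_invFunOn hx, hinj.leftInvOn_invFunOn hy, inv_mul_eq_div,
    le_div_iff₀' hc] at hlip

end

theorem lower_modulus_bound_general (ω : ℝ → ℝ)
    (hmono : MonotoneOn ω (Set.Ici 0))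
    (hdec : AntitoneOn (fun t => ω t / t) (Set.Ioi 0))
    (α : ℝ) (hα : α ∈ Set.Icc (0:ℝ) 1) (C₅ : ℝ) (hC₅ : 0 < C₅)
    (f : ℂ → ℂ) (hreg : ContDiffOn ℝ 1 f (Metric.ball 0 1))
    (hinj : Set.InjOn f (Metric.ball 0 1))
    (hconv : Convex ℝ (f '' Metric.ball 0 1))
    (hbound : ∀ z ∈ Metric.ball (0:ℂ) 1,
      ω ((1 + ‖z‖) ^ (1 - α)) / C₅
        ≤ |‖wdz f z‖ - ‖wdzbar f z‖|) :
    ∀ z₁ ∈ Metric.ball (0:ℂ) 1, ∀ z₂ ∈ Metric.ball (0:ℂ) 1,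
      (1 / ((2:ℝ) ^ (1 - α) * C₅))
          * ω (((1 + ‖z₁‖) * (1 + ‖z₂‖)) ^ ((1 - α) / 2))
          * ‖z₁ - z₂‖
        ≤ ‖f z₁ - f z₂‖ := by
  intro z₁ hz₁ z₂ hz₂
  have hβ : 0 ≤ 1 - α := sub_nonneg.mpr hα.2
  set A := (2:ℝ) ^ (1 - α)
  set s₀ := ((1 + ‖z₁‖) * (1 + ‖z₂‖)) ^ ((1 - α) / 2)
  have hA : 1 ≤ A := Real.one_le_rpow one_le_two hβ
  have hs₀ : 0 < s₀ := by positivity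
  have hs₀A : s₀ ≤ A := one_add_mul_one_add_rpow_div_two_le (norm_nonneg _)
    (mem_ball_zero_iff.mp hz₁).le (norm_nonneg _) (mem_ball_zero_iff.mp hz₂).le hβ
  rcases le_or_gt (ω s₀) 0 with hω | hω
  · exact (mul_nonpos_of_nonpos_of_nonneg (mul_nonpos_of_nonneg_of_nonpos (by positivity) hω)
      (norm_nonneg _)).trans (norm_nonneg _)
  have hω_le : ∀ z : ℂ, ω s₀ / A ≤ ω ((1 + ‖z‖) ^ (1 - α)) := fun z =>
    (div_le_apply_div_of_antitoneOn_div hdec hs₀ hA).trans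
      (hmono (mem_Ici.mpr (by positivity)) (mem_Ici.mpr (by positivity))
        (((div_le_one (by positivity)).mpr hs₀A).trans (Real.one_le_rpow (by simp) hβ)))
  have hstretch : ∀ z ∈ ball (0:ℂ) 1, ∀ v, ω s₀ / (A * C₅) * ‖v‖ ≤ ‖fderiv ℝ f z v‖ := by
    intro z hz v
    refine le_trans ?_ (abs_norm_wdz_sub_norm_wdzbar_mul_le f z v)
    gcongr
    rw [← div_div]
    exact (div_le_div_of_nonneg_right (hω_le z) hC₅.le).trans (hbound z hz)
  calc 1 / (A * C₅) * ω s₀ * ‖z₁ - z₂‖ = ω s₀ / (A * C₅) * ‖z₁ - z₂‖ := by ring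
    _ ≤ ‖f z₁ - f z₂‖ :=
      hconv.mul_norm_sub_le_norm_sub_of_injOn isOpen_ball hreg hinj (by positivity) hstretch
        hz₁ hz₂

/-- Lower Lipschitz-type bound: if f is univalent on 𝔻 with convex image and
    l(D_f(z)) ≥ ω((1+|z|)^{1−α})/C₅ for a majorant ω, then
    |f(z₁) − f(z₂)| ≥ ω(((1+|z₁|)(1+|z₂|))^{(1−α)/2}) |z₁−z₂| / (2^{1−α} C₅). -/
theorem lower_modulus_bound (ω : ℝ → ℝ)
    (hcont : ContinuousOn ω (Set.Ici 0))
    (hmono : MonotoneOn ω (Set.Ici 0))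
    (h0 : ω 0 = 0)
    (hdec : AntitoneOn (fun t => ω t / t) (Set.Ioi 0))
    (α : ℝ) (hα : α ∈ Set.Icc (0:ℝ) 1) (C₅ : ℝ) (hC₅ : 0 < C₅)
    (f : ℂ → ℂ) (hreg : ContDiffOn ℝ 1 f (Metric.ball 0 1))
    (hinj : Set.InjOn f (Metric.ball 0 1))
    (hconv : Convex ℝ (f '' Metric.ball 0 1))
    (hbound : ∀ z ∈ Metric.ball (0:ℂ) 1,
      ω ((1 + ‖z‖) ^ (1 - α)) / C₅
        ≤ |‖wdz f z‖ - ‖wdzbar f z‖|) :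
    ∀ z₁ ∈ Metric.ball (0:ℂ) 1, ∀ z₂ ∈ Metric.ball (0:ℂ) 1,
      (1 / ((2:ℝ) ^ (1 - α) * C₅))
          * ω (((1 + ‖z₁‖) * (1 + ‖z₂‖)) ^ ((1 - α) / 2))
          * ‖z₁ - z₂‖
        ≤ ‖f z₁ - f z₂‖ :=
  lower_modulus_bound_general ω hmono hdec α hα C₅ hC₅ f hreg hinj hconv hbound
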